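/- arXiv:1701.03217 — 3 statements merged into one kernel-verified Lean document; each statement's English description precedes it below -/
import Mathlib

section
/- Fix 0 < p < 1 with 1/2 < p. Let f(x) = (1 - x^p)^(1/p). Then f''' vanishes at exactly one point of (0,1), namely at x = ((2-p)/(1+p))^(1/p). -/
/-!
Writing `u = 1 - x ^ p`, every derivative of `x ^ (p - k) * u ^ (1 / p - k)` is again of this shape
times a factor that is affine in `x ^ p`: this gives `f' = -x ^ (p - 1) u ^ (1 / p - 1)`,
`f'' = (1 - p) x ^ (p - 2) u ^ (1 / p - 2)` and
`f''' = (1 - p) x ^ (p - 3) u ^ (1 / p - 3) ((p - 2) + (1 + p) x ^ p)`.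
On `(0, 1)` the prefactor is nonzero, so `f'''` vanishes exactly where `x ^ p = (2 - p) / (1 + p)`,
and this value lies in `(0, 1)` because `1 / 2 < p < 1`.
-/

open Real Set

section
variable {p : ℝ}

theorem hasDerivAt_rpow_mul_one_sub_rpow_rpow (a b : ℝ) {x : ℝ} (hx : x ≠ 0) (hxp : x ^ p ≠ 1) :
    HasDerivAt (fun y => y ^ a * (1 - y ^ p) ^ b)
      (x ^ (a - 1) * (1 - x ^ p) ^ (b - 1) * (a * (1 - x ^ p) - p * b * x ^ p)) x := by
  have hu : 1 - x ^ p ≠ 0 := sub_ne_zero.2 hxp.symm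
  have hg : HasDerivAt (fun y => 1 - y ^ p) (-(p * x ^ (p - 1))) x :=
    (hasDerivAt_rpow_const (Or.inl hx)).const_sub 1
  refine ((hasDerivAt_rpow_const (Or.inl hx)).mul (hg.rpow_const (Or.inl hu))).congr_deriv ?_
  have hxa : x ^ a = x ^ (a - 1) * x := by rw [← rpow_add_one hx]; ring_nf
  have hxp' : x ^ p = x ^ (p - 1) * x := by rw [← rpow_add_one hx]; ring_nf
  have hub : (1 - x ^ p) ^ b = (1 - x ^ p) ^ (b - 1) * (1 - x ^ p) := by
    rw [← rpow_add_one hu]; ring_nf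
  rw [hxa, hub, hxp']
  ring

theorem hasDerivAt_one_sub_rpow_rpow_inv (hp : p ≠ 0) {x : ℝ} (hx : x ≠ 0) (hxp : x ^ p ≠ 1) :
    HasDerivAt (fun y => (1 - y ^ p) ^ (1 / p)) (-(x ^ (p - 1) * (1 - x ^ p) ^ (1 / p - 1))) x := by
  have h := hasDerivAt_rpow_mul_one_sub_rpow_rpow 0 (1 / p) hx hxp
  simp only [rpow_zero, one_mul, zero_sub, zero_mul] at h
  convert h using 1
  rw [rpow_sub_one hx, rpow_neg_one]
  field_simp

theorem hasDerivAt_rpow_sub_mul_one_sub_rpow_rpow_sub (hp : p ≠ 0) (k : ℝ) {x : ℝ} (hx : x ≠ 0)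
    (hxp : x ^ p ≠ 1) :
    HasDerivAt (fun y => y ^ (p - k) * (1 - y ^ p) ^ (1 / p - k))
      (x ^ (p - k - 1) * (1 - x ^ p) ^ (1 / p - k - 1) * ((p - k) + (k - 1) * (1 + p) * x ^ p))
      x := by
  convert hasDerivAt_rpow_mul_one_sub_rpow_rpow (p - k) (1 / p - k) hx hxp using 1
  field_simp
  ring

theorem deriv_deriv_deriv_one_sub_rpow_rpow_inv (hp : 0 < p) {x : ℝ} (hx : x ∈ Ioo (0 : ℝ) 1) :
    deriv (deriv (deriv fun y => (1 - y ^ p) ^ (1 / p))) x =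
      (1 - p) * (x ^ (p - 3) * (1 - x ^ p) ^ (1 / p - 3) * ((p - 2) + (1 + p) * x ^ p)) := by
  have hxp : ∀ y ∈ Ioo (0 : ℝ) 1, y ^ p < 1 := fun y hy => rpow_lt_one hy.1.le hy.2 hp
  have h1 := deriv_eqOn isOpen_Ioo fun y hy =>
    (hasDerivAt_one_sub_rpow_rpow_inv hp.ne' hy.1.ne' (hxp y hy).ne).hasDerivWithinAt
  have d2 : ∀ y ∈ Ioo (0 : ℝ) 1,
      HasDerivAt (fun y => -(y ^ (p - 1) * (1 - y ^ p) ^ (1 / p - 1)))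
        ((1 - p) * (y ^ (p - 2) * (1 - y ^ p) ^ (1 / p - 2))) y := fun y hy =>
    (hasDerivAt_rpow_sub_mul_one_sub_rpow_rpow_sub hp.ne' 1 hy.1.ne' (hxp y hy).ne).neg.congr_deriv
      (by ring_nf)
  have d3 : ∀ y ∈ Ioo (0 : ℝ) 1,
      HasDerivAt (fun y => (1 - p) * (y ^ (p - 2) * (1 - y ^ p) ^ (1 / p - 2)))
        ((1 - p) * (y ^ (p - 3) * (1 - y ^ p) ^ (1 / p - 3) * ((p - 2) + (1 + p) * y ^ p))) y :=
    fun y hy => ((hasDerivAt_rpow_sub_mul_one_sub_rpow_rpow_sub hp.ne' 2 hy.1.ne'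
      (hxp y hy).ne).const_mul (1 - p)).congr_deriv (by ring_nf)
  have h2 := (h1.deriv isOpen_Ioo).trans <|
    deriv_eqOn isOpen_Ioo fun y hy => (d2 y hy).hasDerivWithinAt
  exact ((h2.deriv isOpen_Ioo).trans <|
    deriv_eqOn isOpen_Ioo fun y hy => (d3 y hy).hasDerivWithinAt) hx

end

theorem stmt6 (p : ℝ) (hp0 : 1 / 2 < p) (hp1 : p < 1)
    (f : ℝ → ℝ) (hf : ∀ x, f x = (1 - x ^ p) ^ (1 / p)) :
    ((2 - p) / (1 + p)) ^ (1 / p) ∈ Set.Ioo (0:ℝ) 1 ∧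
    ∀ x ∈ Set.Ioo (0:ℝ) 1,
      (deriv (deriv (deriv f)) x = 0 ↔ x = ((2 - p) / (1 + p)) ^ (1 / p)) := by
  have hp : 0 < p := by linarith
  have hc0 : 0 < (2 - p) / (1 + p) := by apply div_pos <;> linarith
  have hc1 : (2 - p) / (1 + p) < 1 := by rw [div_lt_one (by linarith)]; linarith
  refine ⟨⟨rpow_pos_of_pos hc0 _, rpow_lt_one hc0.le hc1 (by positivity)⟩, fun x hx => ?_⟩
  have hu : 0 < 1 - x ^ p := sub_pos.2 (rpow_lt_one hx.1.le hx.2 hp)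
  have hfactor : (1 - p) * (x ^ (p - 3) * (1 - x ^ p) ^ (1 / p - 3)) ≠ 0 := by
    have hxa := rpow_pos_of_pos hx.1 (p - 3)
    have hub := rpow_pos_of_pos hu (1 / p - 3)
    have hq : 0 < 1 - p := by linarith
    positivity
  rw [funext hf, deriv_deriv_deriv_one_sub_rpow_rpow_inv hp hx, ← mul_assoc, mul_eq_zero,
    or_iff_right hfactor, one_div, eq_comm (a := x), rpow_inv_eq hc0.le hx.1.le hp.ne',
    div_eq_iff (by linarith)]
  constructor <;> intro h <;> linarith
end

section
/- Let f : [0,L] → ℝ be convex and strictly decreasing with f(0) = M > 0 and f(L) = 0, where L ≥ 2. Let N = #{(j,k) ∈ ℕ₊ × ℕ₊ : k ≤ f(j)} be the number of positive-integer lattice points on or under the graph of f. Then N ≤ ∫₀^L f(x) dx − (1/2) f(L/2). -/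
set_option maxHeartbeats 1000000

theorem stmt8 (L M : ℝ) (hL : 2 ≤ L) (hM : 0 < M)
    (f : ℝ → ℝ) (hconv : ConvexOn ℝ (Set.Icc 0 L) f)
    (hanti : StrictAntiOn f (Set.Icc 0 L))
    (hf0 : f 0 = M) (hfL : f L = 0) :
    (({q : ℕ × ℕ | 0 < q.1 ∧ 0 < q.2 ∧ (q.1 : ℝ) ≤ L ∧ (q.2 : ℝ) ≤ f q.1}.ncard : ℝ))
      ≤ (∫ x in (0:ℝ)..L, f x) - (1 / 2) * f (L / 2) := by
  have hL0 : (0:ℝ) ≤ L := by linarith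
  set n : ℕ := ⌊L⌋₊ with hn
  have hnL : (n:ℝ) ≤ L := Nat.floor_le hL0
  have hLn : L < (n:ℝ) + 1 := Nat.lt_floor_add_one L
  have hn2 : 2 ≤ n := Nat.le_floor (by exact_mod_cast hL)
  have hn2' : (2:ℝ) ≤ (n:ℝ) := by exact_mod_cast hn2
  have hanti' : AntitoneOn f (Set.Icc 0 L) := hanti.antitoneOn
  have hnonneg : ∀ x ∈ Set.Icc (0:ℝ) L, 0 ≤ f x := by
    intro x hx
    rcases eq_or_lt_of_le hx.2 with h | h
    · rw [h, hfL]
    · have := hanti hx (Set.right_mem_Icc.2 hL0) h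
      rw [hfL] at this; linarith
  have hInt : ∀ a b : ℝ, a ∈ Set.Icc (0:ℝ) L → b ∈ Set.Icc (0:ℝ) L →
      IntervalIntegrable f MeasureTheory.volume a b := by
    intro a b ha hb
    exact (hanti'.mono (Set.ordConnected_Icc.uIcc_subset ha hb)).intervalIntegrable
  -- constant lower bound: (b-a) * f b ≤ ∫_a^b f
  have CB : ∀ a b : ℝ, 0 ≤ a → a ≤ b → b ≤ L → (b - a) * f b ≤ ∫ x in a..b, f x := by
    intro a b ha hab hbL
    have hma : a ∈ Set.Icc (0:ℝ) L := ⟨ha, by linarith⟩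
    have hmb : b ∈ Set.Icc (0:ℝ) L := ⟨by linarith, hbL⟩
    calc (b - a) * f b = ∫ _ in a..b, f b := by
          rw [intervalIntegral.integral_const]; simp [smul_eq_mul]
      _ ≤ ∫ x in a..b, f x := by
          apply intervalIntegral.integral_mono_on hab intervalIntegrable_const (hInt a b hma hmb)
          intro x hx
          exact hanti' ⟨by linarith [hx.1], by linarith [hx.2]⟩ hmb hx.2
  have INonneg : ∀ a b : ℝ, 0 ≤ a → a ≤ b → b ≤ L → 0 ≤ ∫ x in a..b, f x := by
    intro a b ha hab hbL
    have := CB a b ha hab hbL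
    have hfb : 0 ≤ f b := hnonneg b ⟨by linarith, hbL⟩
    nlinarith
  -- Hermite-Hadamard (left): 2w f(c) ≤ ∫_{c-w}^{c+w} f
  have HH : ∀ c w : ℝ, 0 ≤ w → 0 ≤ c - w → c + w ≤ L →
      2 * w * f c ≤ ∫ x in (c - w)..(c + w), f x := by
    intro c w hw h1 h2
    have hmcw : c - w ∈ Set.Icc (0:ℝ) L := ⟨h1, by linarith⟩
    have hmc : c ∈ Set.Icc (0:ℝ) L := ⟨by linarith, by linarith⟩
    have hmcw2 : c + w ∈ Set.Icc (0:ℝ) L := ⟨by linarith, h2⟩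
    have hint2 : IntervalIntegrable f MeasureTheory.volume c (c + w) := hInt _ _ hmc hmcw2
    have hint1 : IntervalIntegrable (fun x => f (2 * c - x)) MeasureTheory.volume c (c + w) := by
      apply MonotoneOn.intervalIntegrable
      rw [Set.uIcc_of_le (by linarith : c ≤ c + w)]
      intro x hx y hy hxy
      exact hanti' ⟨by linarith [hy.2], by linarith [hy.1]⟩
        ⟨by linarith [hx.2], by linarith [hx.1]⟩ (by linarith)
    have hsub : (∫ x in c..(c + w), f (2 * c - x)) = ∫ x in (c - w)..c, f x := by
      have h := intervalIntegral.integral_comp_sub_left (a := c) (b := c + w) f (2 * c)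
      rw [show 2 * c - (c + w) = c - w by ring, show 2 * c - c = c by ring] at h
      exact h
    have key : 2 * w * f c ≤ ∫ x in c..(c + w), (f (2 * c - x) + f x) := by
      have hconst : 2 * w * f c = ∫ _ in c..(c + w), (2 * f c) := by
        rw [intervalIntegral.integral_const]; simp [smul_eq_mul]; ring
      rw [hconst]
      apply intervalIntegral.integral_mono_on (by linarith) intervalIntegrable_const
        (hint1.add hint2)
      intro x hx
      have hx1 : 2 * c - x ∈ Set.Icc (0:ℝ) L :=
        ⟨by linarith [hx.2], by linarith [hx.1]⟩
      have hx2 : x ∈ Set.Icc (0:ℝ) L := ⟨by linarith [hx.1], by linarith [hx.2]⟩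
      have hc := hconv.2 hx1 hx2 (by norm_num : (0:ℝ) ≤ 1/2) (by norm_num : (0:ℝ) ≤ 1/2)
        (by norm_num)
      rw [show (1/2 : ℝ) • (2 * c - x) + (1/2 : ℝ) • x = c by
        simp [smul_eq_mul]; ring] at hc
      simp only [smul_eq_mul] at hc
      linarith
    rw [intervalIntegral.integral_add hint1 hint2, hsub] at key
    rw [← intervalIntegral.integral_add_adjacent_intervals (hInt _ _ hmcw hmc) hint2]
    exact key
  -- cardinality bound
  classical
  set S := {q : ℕ × ℕ | 0 < q.1 ∧ 0 < q.2 ∧ (q.1 : ℝ) ≤ L ∧ (q.2 : ℝ) ≤ f q.1} with hS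
  set T : Finset (ℕ × ℕ) :=
    (Finset.Icc 1 n).biUnion (fun j => ({j} : Finset ℕ) ×ˢ Finset.Icc 1 ⌊f j⌋₊) with hT
  have hST : S ⊆ ↑T := by
    rintro ⟨j, k⟩ ⟨h1, h2, h3, h4⟩
    simp only [hT, Finset.coe_biUnion, Set.mem_iUnion, Finset.mem_coe, Finset.mem_Icc,
      Finset.mem_product, Finset.mem_singleton]
    exact ⟨j, ⟨h1, Nat.le_floor h3⟩, rfl, h2, Nat.le_floor h4⟩
  have hcard : (S.ncard : ℝ) ≤ ∑ j ∈ Finset.Icc 1 n, ((⌊f j⌋₊ : ℝ)) := by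
    have h1 : S.ncard ≤ T.card := by
      rw [← Set.ncard_coe_finset]
      exact Set.ncard_le_ncard hST T.finite_toSet
    have h2 : T.card ≤ ∑ j ∈ Finset.Icc 1 n, ⌊f j⌋₊ := by
      refine le_trans Finset.card_biUnion_le (Finset.sum_le_sum ?_)
      intro j _
      simp [Finset.card_product]
    calc (S.ncard : ℝ) ≤ ((∑ j ∈ Finset.Icc 1 n, ⌊f j⌋₊ : ℕ) : ℝ) := by
          exact_mod_cast h1.trans h2
      _ = ∑ j ∈ Finset.Icc 1 n, ((⌊f j⌋₊ : ℝ)) := by push_cast; ring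
  have hmemIcc : ∀ j ∈ Finset.Icc 1 n, ((j:ℝ)) ∈ Set.Icc (0:ℝ) L := by
    intro j hj
    rw [Finset.mem_Icc] at hj
    constructor
    · positivity
    · have : (j:ℝ) ≤ n := by exact_mod_cast hj.2
      linarith
  have hfloor : ∑ j ∈ Finset.Icc 1 n, ((⌊f j⌋₊ : ℝ)) ≤ ∑ j ∈ Finset.Icc 1 n, f j :=
    Finset.sum_le_sum fun j hj => Nat.floor_le (hnonneg _ (hmemIcc j hj))
  -- split off the last term
  have hsplit : ∑ j ∈ Finset.Icc 1 n, f j = (∑ j ∈ Finset.Icc 1 (n-1), f (j:ℕ)) + f n := by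
    have h := Finset.sum_Icc_succ_top (a := 1) (b := n - 1)
      (f := fun j : ℕ => f j) (by omega)
    rw [show n - 1 + 1 = n by omega] at h
    exact h
  -- B1 : middle sum
  have hB1 : ∑ j ∈ Finset.Icc 1 (n-1), f (j:ℕ) ≤ ∫ x in (1/2 : ℝ)..((n:ℝ) - 1/2), f x := by
    set a : ℕ → ℝ := fun k => 1/2 + k with ha
    have hadj : ∀ k, k < n - 1 → IntervalIntegrable f MeasureTheory.volume (a k) (a (k+1)) := by
      intro k hk
      have hk2 : (k:ℝ) + 2 ≤ n := by
        have : k + 2 ≤ n := by omega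
        exact_mod_cast this
      apply hInt
      · constructor
        · simp [ha]; positivity
        · simp only [ha]; push_cast; linarith
      · constructor
        · simp only [ha]; push_cast; positivity
        · simp only [ha]; push_cast; linarith
    have htel := intervalIntegral.sum_integral_adjacent_intervals (a := a) (n := n - 1)
      (μ := MeasureTheory.volume) hadj
    have hsum : ∑ j ∈ Finset.Icc 1 (n-1), f (j:ℕ) = ∑ k ∈ Finset.range (n-1), f ((k:ℕ)+1) := by
      rw [show Finset.Icc 1 (n-1) = Finset.Ico 1 n by
        rw [← Finset.Ico_add_one_right_eq_Icc]; congr 1; omega]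
      rw [Finset.sum_Ico_eq_sum_range]
      refine Finset.sum_congr rfl fun k _ => ?_
      congr 1
      push_cast
      ring
    rw [hsum]
    have hterm : ∀ k ∈ Finset.range (n-1), f ((k:ℕ)+1) ≤ ∫ x in a k..a (k+1), f x := by
      intro k hk
      rw [Finset.mem_range] at hk
      have hk2 : (k:ℝ) + 2 ≤ n := by
        have : k + 2 ≤ n := by omega
        exact_mod_cast this
      have := HH ((k:ℝ) + 1) (1/2) (by norm_num) (by push_cast; linarith) (by push_cast; linarith)
      rw [show (k:ℝ) + 1 - 1/2 = a k by simp [ha]; ring,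
        show (k:ℝ) + 1 + 1/2 = a (k+1) by simp [ha]; push_cast; ring] at this
      linarith
    calc ∑ k ∈ Finset.range (n-1), f ((k:ℕ)+1)
        ≤ ∑ k ∈ Finset.range (n-1), ∫ x in (a k)..(a (k+1)), f x :=
          Finset.sum_le_sum hterm
      _ = ∫ x in (a 0)..(a (n-1)), f x := htel
      _ = ∫ x in (1/2:ℝ)..((n:ℝ) - 1/2), f x := by
          congr 1
          · simp [ha]
          · simp only [ha]
            have : ((n - 1 : ℕ) : ℝ) = (n:ℝ) - 1 := by
              have : (1:ℕ) ≤ n := by omega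
              push_cast [this]; ring
            rw [this]; ring
  -- B2 : last column + the f(L/2)/2 term
  have h12L : (1/2:ℝ) ∈ Set.Icc (0:ℝ) L := ⟨by norm_num, by linarith⟩
  have hL2mem : L/2 ∈ Set.Icc (0:ℝ) L := ⟨by linarith, by linarith⟩
  have hIleft : (1/2) * f (1/2) ≤ ∫ x in (0:ℝ)..(1/2:ℝ), f x := by
    have := CB 0 (1/2) le_rfl (by norm_num) (by linarith)
    linarith
  have hfa : f (L/2) ≤ f (1/2) := hanti' h12L hL2mem (by linarith)
  have hB2 : f n + (1/2) * f (L/2) ≤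
      (∫ x in (0:ℝ)..(1/2:ℝ), f x) + ∫ x in ((n:ℝ) - 1/2)..L, f x := by
    have hnm : ((n:ℝ)) ∈ Set.Icc (0:ℝ) L := ⟨by linarith, hnL⟩
    have hnmw : ((n:ℝ) - 1/2) ∈ Set.Icc (0:ℝ) L := ⟨by linarith, by linarith⟩
    rcases le_or_gt ((n:ℝ) + 1/2) L with hc | hc
    · -- wide case
      have h1 : f n ≤ ∫ x in ((n:ℝ) - 1/2)..((n:ℝ) + 1/2), f x := by
        have := HH (n:ℝ) (1/2) (by norm_num) (by linarith) hc
        linarith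
      have h2 : (∫ x in ((n:ℝ) - 1/2)..L, f x) =
          (∫ x in ((n:ℝ) - 1/2)..((n:ℝ) + 1/2), f x) + ∫ x in ((n:ℝ) + 1/2)..L, f x := by
        rw [intervalIntegral.integral_add_adjacent_intervals
          (hInt _ _ hnmw ⟨by linarith, hc⟩) (hInt _ _ ⟨by linarith, hc⟩ (Set.right_mem_Icc.2 hL0))]
      have h3 : 0 ≤ ∫ x in ((n:ℝ) + 1/2)..L, f x := INonneg _ _ (by linarith) (by linarith) le_rfl
      linarith
    · -- narrow case : L < n + 1/2
      have h1 : (1/2) * f n ≤ ∫ x in ((n:ℝ) - 1/2)..L, f x := by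
        have ha := CB ((n:ℝ) - 1/2) (n:ℝ) (by linarith) (by linarith) hnL
        have hb : 0 ≤ ∫ x in ((n:ℝ))..L, f x := INonneg _ _ (by linarith) hnL le_rfl
        have hc2 : (∫ x in ((n:ℝ) - 1/2)..L, f x) =
            (∫ x in ((n:ℝ) - 1/2)..(n:ℝ), f x) + ∫ x in ((n:ℝ))..L, f x := by
          rw [intervalIntegral.integral_add_adjacent_intervals
            (hInt _ _ hnmw hnm) (hInt _ _ hnm (Set.right_mem_Icc.2 hL0))]
        linarith
      have hkey : f n + f (L/2) ≤ f (1/2) := by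
        rcases eq_or_lt_of_le hnL with he | hlt
        · rw [he, hfL]; linarith
        · have hL2n : L/2 < (n:ℝ) := by linarith
          have s1 := hconv.slope_mono_adjacent h12L hnm (by linarith : (1/2:ℝ) < L/2) hL2n
          have s2 := hconv.slope_mono_adjacent hL2mem (Set.right_mem_Icc.2 hL0) hL2n hlt
          rw [hfL] at s2
          have s : (f (L/2) - f (1/2)) / (L/2 - 1/2) ≤ (0 - f n) / (L - (n:ℝ)) := s1.trans s2
          have hp : (0:ℝ) < L/2 - 1/2 := by linarith
          have hq : (0:ℝ) < L - (n:ℝ) := by linarith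
          rw [div_le_div_iff₀ hp hq] at s
          have hfn : 0 ≤ f (n:ℝ) := hnonneg _ hnm
          have h1 : f (n:ℝ) * (L - (n:ℝ)) ≤ f (n:ℝ) * (L/2 - 1/2) :=
            mul_le_mul_of_nonneg_left (by linarith) hfn
          have h2 : f (n:ℝ) * (L/2 - 1/2) ≤ (f (1/2) - f (L/2)) * (L - (n:ℝ)) := by
            nlinarith [s]
          have h4 : f (n:ℝ) ≤ f (1/2) - f (L/2) :=
            le_of_mul_le_mul_right (h1.trans h2) hq
          linarith
      linarith
  -- B3 : split full integral
  have hB3 : (∫ x in (0:ℝ)..L, f x) =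
      (∫ x in (0:ℝ)..(1/2:ℝ), f x) + (∫ x in (1/2:ℝ)..((n:ℝ) - 1/2), f x)
        + ∫ x in ((n:ℝ) - 1/2)..L, f x := by
    have hnmw : ((n:ℝ) - 1/2) ∈ Set.Icc (0:ℝ) L := ⟨by linarith, by linarith⟩
    rw [intervalIntegral.integral_add_adjacent_intervals
        (hInt _ _ (Set.left_mem_Icc.2 hL0) h12L) (hInt _ _ h12L hnmw),
      intervalIntegral.integral_add_adjacent_intervals
        ((hInt _ _ (Set.left_mem_Icc.2 hL0) h12L).trans (hInt _ _ h12L hnmw))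
        (hInt _ _ hnmw (Set.right_mem_Icc.2 hL0))]
  calc (S.ncard : ℝ) ≤ ∑ j ∈ Finset.Icc 1 n, ((⌊f j⌋₊ : ℝ)) := hcard
    _ ≤ ∑ j ∈ Finset.Icc 1 n, f j := hfloor
    _ = (∑ j ∈ Finset.Icc 1 (n-1), f (j:ℕ)) + f n := hsplit
    _ ≤ (∫ x in (0:ℝ)..L, f x) - (1/2) * f (L/2) := by
        rw [hB3]; linarith
end

section
/- Let f : [0,L] → ℝ be convex and strictly decreasing with f(0) = M > 0 and f(L) = 0. Let 𝒩 = #{(j,k) ∈ ℤ₊ × ℤ₊ : k ≤ f(j)} be the number of nonnegative-integer lattice points on or under the graph of f. Then 𝒩 ≥ ∫₀^L f(x) dx + M/2. -/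
open Finset

theorem stmt9 (L M : ℝ) (hL : 0 < L) (hM : 0 < M)
    (f : ℝ → ℝ) (hconv : ConvexOn ℝ (Set.Icc 0 L) f)
    (hanti : StrictAntiOn f (Set.Icc 0 L))
    (hf0 : f 0 = M) (hfL : f L = 0) :
    (({q : ℕ × ℕ | (q.1 : ℝ) ≤ L ∧ (q.2 : ℝ) ≤ f q.1}.ncard : ℝ))
      ≥ (∫ x in (0:ℝ)..L, f x) + M / 2 := by
  set n := ⌊L⌋₊ with hn
  set m := ⌊M⌋₊ with hm
  have hLn : (n : ℝ) ≤ L := Nat.floor_le hL.le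
  have hLn' : L < n + 1 := Nat.lt_floor_add_one L
  have hanti' : AntitoneOn f (Set.Icc 0 L) := hanti.antitoneOn
  have hmem : ∀ j : ℕ, j ≤ n → (j : ℝ) ∈ Set.Icc 0 L := by
    intro j hj
    exact Set.mem_Icc.2 ⟨Nat.cast_nonneg j, le_trans (by exact_mod_cast Nat.cast_le.2 hj) hLn⟩
  have hfM : ∀ j : ℕ, j ≤ n → f j ≤ M := by
    intro j hj
    rw [← hf0]
    exact hanti' (Set.mem_Icc.2 ⟨le_refl 0, hL.le⟩) (hmem j hj) (Nat.cast_nonneg j)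
  have hfnn : ∀ j : ℕ, j ≤ n → 0 ≤ f j := by
    intro j hj
    rw [← hfL]
    exact hanti' (hmem j hj) (Set.mem_Icc.2 ⟨hL.le, le_refl L⟩) ((hmem j hj).2)
  -- integrability on subintervals
  have hint : ∀ a b : ℝ, 0 ≤ a → a ≤ b → b ≤ L → IntervalIntegrable f MeasureTheory.volume a b := by
    intro a b ha hab hb
    apply AntitoneOn.intervalIntegrable
    apply hanti'.mono
    rw [Set.uIcc_of_le hab]
    exact Set.Icc_subset_Icc ha hb
  -- chord bound
  have chord : ∀ a b : ℝ, 0 ≤ a → a ≤ b → b ≤ L →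
      (∫ x in a..b, f x) ≤ (b - a) * (f a + f b) / 2 := by
    intro a b ha hab hb
    rcases eq_or_lt_of_le hab with rfl | hlt
    · simp
    · have hba : 0 < b - a := sub_pos.2 hlt
      set c : ℝ := (f b - f a) / (b - a) with hc
      have hle : ∀ x ∈ Set.Icc a b, f x ≤ (f a - a * c) + c * x := by
        intro x hx
        obtain ⟨hx1, hx2⟩ := Set.mem_Icc.1 hx
        set t : ℝ := (x - a) / (b - a) with htdef
        have ht0 : 0 ≤ t := div_nonneg (by linarith) hba.le
        have ht1 : t ≤ 1 := (div_le_one hba).2 (by linarith)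
        have h := hconv.2 (Set.mem_Icc.2 ⟨ha, le_trans hab hb⟩)
          (Set.mem_Icc.2 ⟨le_trans ha hab, hb⟩) (by linarith : (0:ℝ) ≤ 1 - t) ht0
          (by ring : (1 - t) + t = 1)
        have hx' : (1 - t) • a + t • b = x := by
          simp only [smul_eq_mul, htdef]
          field_simp
          ring
        rw [hx'] at h
        have hrhs : (1 - t) • f a + t • f b = (f a - a * c) + c * x := by
          simp only [smul_eq_mul, htdef, hc]
          field_simp
          ring
        linarith [h, hrhs.le, hrhs.ge]
      have hgint : IntervalIntegrable (fun x => (f a - a * c) + c * x) MeasureTheory.volume a b :=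
        (Continuous.intervalIntegrable (by continuity)) a b
      have hmono := intervalIntegral.integral_mono_on hab (hint a b ha hab hb) hgint hle
      have hg : (∫ x in a..b, ((f a - a * c) + c * x)) = (b - a) * (f a + f b) / 2 := by
        rw [intervalIntegral.integral_add intervalIntegrable_const
          (Continuous.intervalIntegrable (by continuity) a b)]
        rw [intervalIntegral.integral_const, intervalIntegral.integral_const_mul,
          integral_id]
        simp only [smul_eq_mul, hc]
        field_simp
        ring
      linarith [hmono, hg.le, hg.ge]
  -- split the integral
  have hsum_split : (∑ j ∈ range n, ∫ x in (j:ℝ)..((j:ℝ)+1), f x) = ∫ x in (0:ℝ)..(n:ℝ), f x := by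
    have := intervalIntegral.sum_integral_adjacent_intervals (a := fun i : ℕ => (i : ℝ))
      (μ := MeasureTheory.volume) (f := f) (n := n) ?_
    · simpa [Nat.cast_succ] using this
    · intro i hi
      have hi1 : (i : ℝ) + 1 ≤ n := by exact_mod_cast Nat.succ_le_of_lt hi
      exact_mod_cast hint i (i+1) (Nat.cast_nonneg i) (by linarith) (le_trans hi1 hLn)
  have hsplit : (∫ x in (0:ℝ)..L, f x)
      = (∑ j ∈ range n, ∫ x in (j:ℝ)..((j:ℝ)+1), f x) + ∫ x in (n:ℝ)..L, f x := by
    rw [hsum_split]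
    rw [intervalIntegral.integral_add_adjacent_intervals
      (hint 0 n (le_refl 0) (Nat.cast_nonneg n) hLn) (hint n L (Nat.cast_nonneg n) hLn le_rfl)]
  -- bound each piece
  have hpiece : ∀ j ∈ range n, (∫ x in (j:ℝ)..((j:ℝ)+1), f x) ≤ (f j + f (j+1)) / 2 := by
    intro j hj
    have hj' : (j:ℝ) + 1 ≤ n := by
      have := Finset.mem_range.1 hj
      exact_mod_cast Nat.succ_le_of_lt this
    have h := chord j ((j:ℝ)+1) (Nat.cast_nonneg j) (by linarith) (le_trans hj' hLn)
    have h1 : ((j:ℝ)+1 - j) = 1 := by ring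
    rw [h1, one_mul] at h
    exact h
  have hlast : (∫ x in (n:ℝ)..L, f x) ≤ f n / 2 := by
    have h1 := chord n L (Nat.cast_nonneg n) hLn le_rfl
    have h2 : (L - n) * (f n + f L) / 2 ≤ f n / 2 := by
      rw [hfL]
      have hfn : 0 ≤ f n := hfnn n le_rfl
      nlinarith [hLn']
    linarith
  -- telescoping
  have htel : (∑ j ∈ range n, (f j + f ((j:ℕ)+1)) / 2)
      = (∑ j ∈ range (n+1), f j) - (f 0 + f n) / 2 := by
    have e1 : (∑ j ∈ range n, f ((j:ℕ)+1)) = (∑ j ∈ range (n+1), f j) - f 0 := by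
      rw [Finset.sum_range_succ' (fun j => f (j:ℕ))]
      push_cast
      ring
    have e2 : (∑ j ∈ range n, f j) = (∑ j ∈ range (n+1), f j) - f n := by
      rw [Finset.sum_range_succ]
      ring
    rw [show (∑ j ∈ range n, (f j + f ((j:ℕ)+1)) / 2)
        = ((∑ j ∈ range n, f j) + ∑ j ∈ range n, f ((j:ℕ)+1)) / 2 by
      rw [← Finset.sum_add_distrib, ← Finset.sum_div]]
    rw [e1, e2]
    ring
  have key : (∫ x in (0:ℝ)..L, f x) + M / 2 ≤ ∑ j ∈ range (n+1), f j := by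
    have hsumle : (∑ j ∈ range n, ∫ x in (j:ℝ)..((j:ℝ)+1), f x)
        ≤ ∑ j ∈ range n, (f j + f ((j:ℕ)+1)) / 2 := by
      apply Finset.sum_le_sum
      intro j hj
      have := hpiece j hj
      push_cast at this ⊢
      exact this
    rw [hsplit]
    rw [htel] at hsumle
    rw [← hf0]
    linarith
  -- counting
  have hfm : ∀ j : ℕ, j ≤ n → ⌊f j⌋₊ ≤ m := fun j hj => Nat.floor_mono (hfM j hj)
  set T : Finset (ℕ × ℕ) :=
    (range (n+1) ×ˢ range (m+1)).filter (fun q => (q.2 : ℝ) ≤ f q.1) with hT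
  have hST : {q : ℕ × ℕ | (q.1 : ℝ) ≤ L ∧ (q.2 : ℝ) ≤ f q.1} = ↑T := by
    ext ⟨j, k⟩
    simp only [Set.mem_setOf_eq, hT, Finset.coe_filter, Finset.mem_product,
      Finset.mem_range, Nat.lt_succ_iff, Set.mem_setOf_eq, Finset.mem_coe,
      Finset.mem_filter]
    constructor
    · rintro ⟨h1, h2⟩
      have hjn : j ≤ n := Nat.le_floor h1
      have hkm : k ≤ m := Nat.le_floor (h2.trans (hfM j hjn))
      exact ⟨⟨hjn, hkm⟩, h2⟩
    · rintro ⟨⟨h1, _⟩, h2⟩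
      exact ⟨le_trans (by exact_mod_cast Nat.cast_le.2 h1) hLn, h2⟩
  rw [hST, Set.ncard_coe_finset]
  -- lower bound on T.card
  set U : Finset ((_ : ℕ) × ℕ) := (range (n+1)).sigma (fun j => range (⌊f j⌋₊ + 1)) with hU
  set V : Finset (ℕ × ℕ) := U.map (Equiv.sigmaEquivProd ℕ ℕ).toEmbedding with hV
  have hVT : V ⊆ T := by
    intro q hq
    rw [hV, Finset.mem_map] at hq
    obtain ⟨⟨j, k⟩, hmemU, rfl⟩ := hq
    rw [hU, Finset.mem_sigma, Finset.mem_range, Finset.mem_range] at hmemU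
    obtain ⟨hj, hk⟩ := hmemU
    have hjn : j ≤ n := Nat.lt_succ_iff.1 hj
    have hk' : k ≤ ⌊f j⌋₊ := Nat.lt_succ_iff.1 hk
    rw [hT, Finset.mem_filter, Finset.mem_product]
    refine ⟨⟨?_, ?_⟩, ?_⟩
    · simpa using hj
    · simp only [Finset.mem_range, Nat.lt_succ_iff]
      exact le_trans hk' (hfm j hjn)
    · show ((k:ℕ) : ℝ) ≤ f j
      calc (k : ℝ) ≤ (⌊f j⌋₊ : ℝ) := by exact_mod_cast hk'
        _ ≤ f j := Nat.floor_le (hfnn j hjn)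
  have hcard : (∑ j ∈ range (n+1), f j) ≤ (T.card : ℝ) := by
    have h1 : V.card ≤ T.card := Finset.card_le_card hVT
    have h2 : V.card = ∑ j ∈ range (n+1), (⌊f j⌋₊ + 1) := by
      rw [hV, Finset.card_map, hU, Finset.card_sigma]
      simp [Finset.card_range]
    have h3 : (∑ j ∈ range (n+1), f j) ≤ (∑ j ∈ range (n+1), ((⌊f j⌋₊ : ℝ) + 1)) := by
      apply Finset.sum_le_sum
      intro j _
      exact (Nat.lt_floor_add_one (f j)).le
    calc (∑ j ∈ range (n+1), f j) ≤ ∑ j ∈ range (n+1), ((⌊f j⌋₊ : ℝ) + 1) := h3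
      _ = ((∑ j ∈ range (n+1), (⌊f j⌋₊ + 1) : ℕ) : ℝ) := by push_cast; ring
      _ = (V.card : ℝ) := by rw [h2]
      _ ≤ (T.card : ℝ) := by exact_mod_cast h1
  linarith [key, hcard]
end
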